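/- arXiv:1010.4035 — 3 statements merged into one kernel-verified Lean document; each statement's English description precedes it below -/
import Mathlib

section
/- Let Y : ℕ^d → ℝ≥0 satisfy the submultiplicativity condition Y(α + β) ≤ Y(α)·Y(β) for all multi-indices α, β. Then for every θ in the open standard (d−1)-simplex Σ⁰ (all coordinates strictly positive, summing to 1), the limit T(Y, θ) := lim_{α/|α| → θ, |α| → ∞} Y(α)^{1/|α|} exists. -/
open Filter

section DCL
variable {d : ℕ}

lemma dcl_growth (Y : (Fin d → ℕ) → ℝ) (hY0 : ∀ α, 0 ≤ Y α)
    (hsub : ∀ α β, Y (α + β) ≤ Y α * Y β) :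
    ∃ C : ℝ, 1 ≤ C ∧ (∀ r : Fin d → ℕ, Y r ≤ C ^ (∑ i, r i + 1)) ∧
      ∀ i, Y (Pi.single i 1) ≤ C := by
  set C : ℝ := max 1 (Y 0) + ∑ i, Y (Pi.single i 1) with hC
  have hsumnon : (0:ℝ) ≤ ∑ i, Y (Pi.single i 1) :=
    Finset.sum_nonneg fun i _ => hY0 _
  have hC1 : (1:ℝ) ≤ C := le_add_of_le_of_nonneg (le_max_left _ _) hsumnon
  have hC0 : Y 0 ≤ C := le_add_of_le_of_nonneg (le_max_right _ _) hsumnon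
  have hCe : ∀ i, Y (Pi.single i 1) ≤ C := by
    intro i
    have : Y (Pi.single i 1) ≤ ∑ j, Y (Pi.single j 1) :=
      Finset.single_le_sum (fun j _ => hY0 (Pi.single j 1)) (Finset.mem_univ i)
    have h0 : (0:ℝ) ≤ max 1 (Y 0) := le_trans zero_le_one (le_max_left _ _)
    linarith
  refine ⟨C, hC1, ?_, hCe⟩
  have key : ∀ n : ℕ, ∀ r : Fin d → ℕ, ∑ i, r i = n → Y r ≤ C ^ (n + 1) := by
    intro n
    induction n with
    | zero =>
      intro r hr
      have : r = 0 := by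
        funext i
        exact Finset.sum_eq_zero_iff.mp hr i (Finset.mem_univ i)
      rw [this, pow_one]
      exact hC0
    | succ n ih =>
      intro r hr
      have : ∃ i, 0 < r i := by
        by_contra h
        push_neg at h
        have : ∑ i, r i = 0 := Finset.sum_eq_zero fun i _ => Nat.le_zero.mp (h i)
        omega
      obtain ⟨i, hi⟩ := this
      set r' : Fin d → ℕ := r - Pi.single i 1 with hr'
      have hdec : r = r' + Pi.single i 1 := by
        funext j
        by_cases hj : j = i
        · subst hj
          simp [hr', Pi.sub_apply]
          omega
        · simp [hr', Pi.sub_apply, Pi.single_apply, hj]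
      have hsum' : ∑ j, r' j = n := by
        have : ∑ j, (r' j + (Pi.single i 1 : Fin d → ℕ) j) = n + 1 := by
          rw [← hr]
          refine Finset.sum_congr rfl fun j _ => ?_
          exact (congrFun hdec j).symm
        rw [Finset.sum_add_distrib] at this
        simp [Pi.single_apply] at this
        omega
      calc Y r = Y (r' + Pi.single i 1) := by rw [← hdec]
        _ ≤ Y r' * Y (Pi.single i 1) := hsub _ _
        _ ≤ C ^ (n + 1) * C := by
            apply mul_le_mul (ih r' hsum') (hCe i) (hY0 _)
            positivity
        _ = C ^ (n + 1 + 1) := by ring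
  intro r
  exact key _ r rfl

lemma dcl_nsmul (Y : (Fin d → ℕ) → ℝ) (hY0 : ∀ α, 0 ≤ Y α)
    (hsub : ∀ α β, Y (α + β) ≤ Y α * Y β) (β : Fin d → ℕ) :
    ∀ n : ℕ, 1 ≤ n → Y (n • β) ≤ Y β ^ n := by
  intro n
  induction n with
  | zero => omega
  | succ n ih =>
    intro _
    by_cases hn : 1 ≤ n
    · have : (n + 1) • β = n • β + β := by rw [add_smul, one_smul]
      rw [this]
      calc Y (n • β + β) ≤ Y (n • β) * Y β := hsub _ _
        _ ≤ Y β ^ n * Y β := mul_le_mul_of_nonneg_right (ih hn) (hY0 _)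
        _ = Y β ^ (n + 1) := by ring
    · have : n = 0 := by omega
      subst this
      simp

end DCL

section DCL2
variable {d : ℕ}

lemma dcl_coord (α : ℕ → Fin d → ℕ)
    (h1 : Tendsto (fun k => (∑ i, α k i : ℕ)) atTop atTop)
    (θ : Fin d → ℝ) (hθpos : ∀ i, 0 < θ i)
    (h2 : ∀ i, Tendsto (fun k => (α k i : ℝ) / ((∑ i, α k i : ℕ) : ℝ)) atTop (nhds (θ i))) :
    ∀ i, Tendsto (fun k => α k i) atTop atTop := by
  intro i
  have hS : Tendsto (fun k => ((∑ i, α k i : ℕ) : ℝ)) atTop atTop :=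
    tendsto_natCast_atTop_atTop.comp h1
  have hm : Tendsto (fun k => (α k i : ℝ) / ((∑ i, α k i : ℕ) : ℝ)
      * ((∑ i, α k i : ℕ) : ℝ)) atTop atTop :=
    Tendsto.pos_mul_atTop (hθpos i) (h2 i) hS
  have heq : (fun k => (α k i : ℝ) / ((∑ i, α k i : ℕ) : ℝ) * ((∑ i, α k i : ℕ) : ℝ))
      =ᶠ[atTop] fun k => (α k i : ℝ) := by
    filter_upwards [h1.eventually_ge_atTop 1] with k hk
    have : ((∑ i, α k i : ℕ) : ℝ) ≠ 0 := by
      have : (1:ℝ) ≤ ((∑ i, α k i : ℕ) : ℝ) := by exact_mod_cast hk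
      linarith
    rw [div_mul_cancel₀ _ this]
  have := hm.congr' heq
  exact tendsto_natCast_atTop_iff.mp this

lemma dcl_ev_zero (Y : (Fin d → ℕ) → ℝ) (hY0 : ∀ α, 0 ≤ Y α)
    (hsub : ∀ α β, Y (α + β) ≤ Y α * Y β)
    (γ : Fin d → ℕ) (hγ : Y γ = 0)
    (α : ℕ → Fin d → ℕ)
    (h1 : Tendsto (fun k => (∑ i, α k i : ℕ)) atTop atTop)
    (θ : Fin d → ℝ) (hθpos : ∀ i, 0 < θ i)
    (h2 : ∀ i, Tendsto (fun k => (α k i : ℝ) / ((∑ i, α k i : ℕ) : ℝ)) atTop (nhds (θ i))) :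
    ∀ᶠ k in atTop, Y (α k) ^ (((∑ i, α k i : ℕ) : ℝ))⁻¹ = 0 := by
  have hco := dcl_coord α h1 θ hθpos h2
  have hge : ∀ᶠ k in atTop, ∀ i, γ i ≤ α k i :=
    eventually_all.mpr fun i => (hco i).eventually_ge_atTop (γ i)
  filter_upwards [hge, h1.eventually_ge_atTop 1] with k hk hk1
  have hdec : α k = γ + (α k - γ) := by
    funext i
    have := hk i
    simp [Pi.add_apply, Pi.sub_apply]
    omega
  have hle : Y (α k) ≤ 0 := by
    calc Y (α k) = Y (γ + (α k - γ)) := by rw [← hdec]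
      _ ≤ Y γ * Y (α k - γ) := hsub _ _
      _ = 0 := by rw [hγ, zero_mul]
  have hzero : Y (α k) = 0 := le_antisymm hle (hY0 _)
  rw [hzero]
  apply Real.zero_rpow
  have : (1:ℝ) ≤ ((∑ i, α k i : ℕ) : ℝ) := by exact_mod_cast hk1
  exact inv_ne_zero (by linarith)

lemma dcl_g_bound (Y : (Fin d → ℕ) → ℝ) (hY0 : ∀ α, 0 ≤ Y α)
    (C : ℝ) (hC1 : 1 ≤ C) (hCpow : ∀ r : Fin d → ℕ, Y r ≤ C ^ (∑ i, r i + 1))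
    (α : ℕ → Fin d → ℕ)
    (h1 : Tendsto (fun k => (∑ i, α k i : ℕ)) atTop atTop) :
    ∀ᶠ k in atTop, Y (α k) ^ (((∑ i, α k i : ℕ) : ℝ))⁻¹ ≤ C ^ (2:ℕ) := by
  have hC0 : (0:ℝ) ≤ C := le_trans zero_le_one hC1
  filter_upwards [h1.eventually_ge_atTop 1] with k hk
  set n : ℕ := ∑ i, α k i with hn
  have hnR : (1:ℝ) ≤ (n:ℝ) := by exact_mod_cast hk
  have h0n : (0:ℝ) < (n:ℝ) := lt_of_lt_of_le zero_lt_one hnR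
  calc Y (α k) ^ ((n:ℝ))⁻¹ ≤ (C ^ (n+1)) ^ ((n:ℝ))⁻¹ :=
        Real.rpow_le_rpow (hY0 _) (hCpow _) (by positivity)
    _ = C ^ (((n:ℝ)+1) * ((n:ℝ))⁻¹) := by
        rw [← Real.rpow_natCast C (n+1), ← Real.rpow_mul hC0]
        push_cast
        ring_nf
    _ ≤ C ^ ((2:ℕ):ℝ) := by
        apply Real.rpow_le_rpow_of_exponent_le hC1
        rw [mul_inv_le_iff₀ h0n]
        push_cast
        nlinarith
    _ = C ^ (2:ℕ) := Real.rpow_natCast C 2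

end DCL2

set_option maxHeartbeats 2000000 in
lemma dcl_cross (Y : (Fin d → ℕ) → ℝ) (hY0 : ∀ α, 0 ≤ Y α)
    (hsub : ∀ α β, Y (α + β) ≤ Y α * Y β)
    (θ : Fin d → ℝ) (hθsum : ∑ i, θ i = 1) (hθpos : ∀ i, 0 < θ i)
    (α α' : ℕ → Fin d → ℕ)
    (ha1 : Tendsto (fun k => (∑ i, α k i : ℕ)) atTop atTop)
    (ha2 : ∀ i, Tendsto (fun k => (α k i : ℝ) / ((∑ i, α k i : ℕ) : ℝ)) atTop (nhds (θ i)))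
    (hb1 : Tendsto (fun k => (∑ i, α' k i : ℕ)) atTop atTop)
    (hb2 : ∀ i, Tendsto (fun k => (α' k i : ℝ) / ((∑ i, α' k i : ℕ) : ℝ)) atTop (nhds (θ i))) :
    limsup (fun k => Y (α k) ^ (((∑ i, α k i : ℕ) : ℝ))⁻¹) atTop ≤
      liminf (fun k => Y (α' k) ^ (((∑ i, α' k i : ℕ) : ℝ))⁻¹) atTop := by
  set G : ℕ → ℝ := fun k => Y (α k) ^ (((∑ i, α k i : ℕ) : ℝ))⁻¹ with hG
  set G' : ℕ → ℝ := fun k => Y (α' k) ^ (((∑ i, α' k i : ℕ) : ℝ))⁻¹ with hG'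
  by_cases hzero : ∃ γ, Y γ = 0
  · obtain ⟨γ, hγ⟩ := hzero
    have hA : Tendsto G atTop (nhds (0:ℝ)) :=
      Tendsto.congr' ((dcl_ev_zero Y hY0 hsub γ hγ α ha1 θ hθpos ha2).mono
        fun k hk => hk.symm) tendsto_const_nhds
    have hB : Tendsto G' atTop (nhds (0:ℝ)) :=
      Tendsto.congr' ((dcl_ev_zero Y hY0 hsub γ hγ α' hb1 θ hθpos hb2).mono
        fun k hk => hk.symm) tendsto_const_nhds
    rw [hA.limsup_eq, hB.liminf_eq]
  -- positive case
  push_neg at hzero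
  have hpos : ∀ γ, 0 < Y γ := fun γ => lt_of_le_of_ne (hY0 γ) (Ne.symm (hzero γ))
  obtain ⟨C, hC1, hCpow, hCe⟩ := dcl_growth Y hY0 hsub
  have hC0 : (0:ℝ) < C := lt_of_lt_of_le zero_lt_one hC1
  have hGnon : ∀ k, 0 ≤ G k := fun k => Real.rpow_nonneg (hY0 _) _
  have hG'non : ∀ k, 0 ≤ G' k := fun k => Real.rpow_nonneg (hY0 _) _
  have hGbd := dcl_g_bound Y hY0 C hC1 hCpow α ha1
  have hG'bd := dcl_g_bound Y hY0 C hC1 hCpow α' hb1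
  have hcoG : IsCoboundedUnder (· ≤ ·) atTop G :=
    isCoboundedUnder_le_of_le atTop fun k => hGnon k
  have hcoG' : IsCoboundedUnder (· ≥ ·) atTop G' :=
    isCoboundedUnder_ge_of_eventually_le atTop hG'bd
  have hbG' : IsBoundedUnder (· ≤ ·) atTop G' := ⟨C ^ (2:ℕ), eventually_map.mpr hG'bd⟩
  set L' : ℝ := liminf G' atTop with hL'
  have hL'0 : 0 ≤ L' :=
    le_liminf_of_le (hbG'.isCoboundedUnder_ge) (Eventually.of_forall hG'non)
  -- key claim
  have key : ∀ u : ℝ, L' < u → u ≤ C ^ (2:ℕ) → limsup G atTop ≤ u := by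
    intro u hu huC
    set v : ℝ := (L' + u) / 2 with hv
    have hv1 : L' < v := by rw [hv]; linarith
    have hv2 : v < u := by rw [hv]; linarith
    have hv0 : 0 < v := lt_of_le_of_lt hL'0 hv1
    have hvC : v ≤ C ^ (2:ℕ) := le_of_lt (lt_of_lt_of_le hv2 huC)
    -- choose η
    obtain ⟨η, hη0, hη1, hηu⟩ :
        ∃ η : ℝ, 0 < η ∧ η < 1 ∧ v ^ (1 - η) * C ^ ((4:ℝ) * η) < u := by
      have hcont : Continuous (fun t : ℝ =>
          Real.exp (Real.log v * (1 - t)) * Real.exp (Real.log C * (4 * t))) := by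
        continuity
      have this : Tendsto (fun t : ℝ =>
          Real.exp (Real.log v * (1 - t)) * Real.exp (Real.log C * (4 * t)))
          (nhds 0) (nhds v) := by
        have := hcont.tendsto 0
        simpa [Real.exp_log hv0] using this
      have hev : ∀ᶠ t in nhds (0:ℝ),
          Real.exp (Real.log v * (1 - t)) * Real.exp (Real.log C * (4 * t)) < u :=
        this.eventually_lt_const hv2
      rw [Metric.eventually_nhds_iff] at hev
      obtain ⟨ε, hε0, hε⟩ := hev
      refine ⟨min (ε/2) (1/2), by positivity, ?_, ?_⟩
      · have : min (ε/2) (1/2) ≤ 1/2 := min_le_right _ _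
        linarith
      · have hd : dist (min (ε/2) (1/2)) 0 < ε := by
          rw [Real.dist_eq, sub_zero, abs_of_pos (by positivity)]
          have : min (ε/2) (1/2) ≤ ε/2 := min_le_left _ _
          linarith
        have := hε hd
        rwa [Real.rpow_def_of_pos hv0, Real.rpow_def_of_pos hC0]
    -- θmin and δ
    have hdne : Nonempty (Fin d) := by
      rcases Nat.eq_zero_or_pos d with h | h
      · subst h; simp at hθsum
      · exact ⟨⟨0, h⟩⟩
    set θmin : ℝ := Finset.univ.inf' Finset.univ_nonempty θ with hθm
    have hθmin_pos : 0 < θmin := (Finset.lt_inf'_iff _).mpr fun i _ => hθpos i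
    have hθmin_le : ∀ i, θmin ≤ θ i := fun i => Finset.inf'_le θ (Finset.mem_univ i)
    set δ : ℝ := η * θmin / 4 with hδ
    have hδ0 : 0 < δ := by positivity
    have hδkey : ∀ i, (1 - η / 2) * (θ i + δ) ≤ θ i - δ := by
      intro i
      have h1 := hθmin_le i
      have h2 := hθpos i
      rw [hδ]
      nlinarith
    -- pick j / β
    have hfreq : ∃ᶠ j in atTop, G' j < v := frequently_lt_of_liminf_lt hcoG' hv1
    have hev' : ∀ᶠ j in atTop,
        (∀ i, |(α' j i : ℝ) / ((∑ i, α' j i : ℕ) : ℝ) - θ i| < δ) ∧ 1 ≤ ∑ i, α' j i := by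
      apply Eventually.and
      · exact eventually_all.mpr fun i =>
          (Metric.tendsto_nhds.mp (hb2 i) δ hδ0).mono fun j hj => by
            rwa [Real.dist_eq] at hj
      · exact hb1.eventually_ge_atTop 1
    obtain ⟨j, hjv, hjdir, hjB⟩ := (hfreq.and_eventually hev').exists
    set β : Fin d → ℕ := α' j with hβdef
    set B : ℕ := ∑ i, β i with hBdef
    have hB1 : 1 ≤ B := hjB
    have hBR : (1:ℝ) ≤ (B:ℝ) := by exact_mod_cast hB1
    have hB0 : (0:ℝ) < (B:ℝ) := lt_of_lt_of_le zero_lt_one hBR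
    have hBne : (B:ℝ) ≠ 0 := ne_of_gt hB0
    have hjv' : Y β ^ ((B:ℝ))⁻¹ < v := hjv
    have hβv : Y β ≤ v ^ B := by
      have h1 : (Y β ^ ((B:ℝ))⁻¹) ^ B ≤ v ^ B :=
        pow_le_pow_left₀ (Real.rpow_nonneg (hY0 _) _) (le_of_lt hjv') B
      rwa [Real.rpow_inv_natCast_pow (hY0 _) (by omega)] at h1
    have hβc : ∀ i, (β i : ℝ) ≤ (θ i + δ) * B := by
      intro i
      have h := abs_lt.mp (hjdir i)
      have h2 : (β i : ℝ) / B < θ i + δ := by linarith [h.2]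
      calc (β i : ℝ) = ((β i : ℝ) / B) * B := by field_simp
        _ ≤ (θ i + δ) * B := mul_le_mul_of_nonneg_right (le_of_lt h2) (le_of_lt hB0)
    -- eventual conditions on α
    have hSR : Tendsto (fun k => ((∑ i, α k i : ℕ) : ℝ)) atTop atTop :=
      tendsto_natCast_atTop_atTop.comp ha1
    have hdirA : ∀ᶠ k in atTop, ∀ i,
        |(α k i : ℝ) / ((∑ i, α k i : ℕ) : ℝ) - θ i| < δ :=
      eventually_all.mpr fun i =>
        (Metric.tendsto_nhds.mp (ha2 i) δ hδ0).mono fun k hk => by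
          rwa [Real.dist_eq] at hk
    have hbig : ∀ᶠ k in atTop, (2 * (B:ℝ) + 1) / η ≤ ((∑ i, α k i : ℕ) : ℝ) :=
      hSR.eventually_ge_atTop _
    have hone : ∀ᶠ k in atTop, 1 ≤ ∑ i, α k i := ha1.eventually_ge_atTop 1
    have hevG : ∀ᶠ k in atTop, G k ≤ v ^ (1 - η) * C ^ ((4:ℝ) * η) := by
      filter_upwards [hdirA, hbig, hone] with k hdir hnB hn1
      set n : ℕ := ∑ i, α k i with hn
      have hnR1 : (1:ℝ) ≤ (n:ℝ) := by exact_mod_cast hn1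
      have hn0 : (0:ℝ) < (n:ℝ) := lt_of_lt_of_le zero_lt_one hnR1
      have hηn : 2 * (B:ℝ) + 1 ≤ η * n := by
        rw [div_le_iff₀ hη0] at hnB
        linarith
      have h1η2 : (0:ℝ) < 1 - η / 2 := by linarith
      set m : ℕ := ⌊(1 - η / 2) * (n:ℝ) / (B:ℝ)⌋₊ with hm
      have hx0 : (0:ℝ) ≤ (1 - η / 2) * (n:ℝ) / (B:ℝ) := by positivity
      have hm_le : (m:ℝ) ≤ (1 - η / 2) * (n:ℝ) / (B:ℝ) := Nat.floor_le hx0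
      have hm_ge : (1 - η / 2) * (n:ℝ) / (B:ℝ) - 1 ≤ (m:ℝ) := by
        have := Nat.lt_floor_add_one ((1 - η / 2) * (n:ℝ) / (B:ℝ))
        rw [← hm] at this
        linarith
      have hq : ((1 - η / 2) * (n:ℝ) / (B:ℝ)) * (B:ℝ) = (1 - η / 2) * (n:ℝ) :=
        div_mul_cancel₀ _ hBne
      have hmB_le : (m:ℝ) * (B:ℝ) ≤ (1 - η / 2) * (n:ℝ) := by
        have := mul_le_mul_of_nonneg_right hm_le (le_of_lt hB0)
        rwa [hq] at this
      have hmB_ge : (1 - η) * (n:ℝ) ≤ (m:ℝ) * (B:ℝ) := by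
        have h2 := mul_le_mul_of_nonneg_right hm_ge (le_of_lt hB0)
        rw [sub_mul, hq, one_mul] at h2
        nlinarith
      have hcoord : ∀ i, m * β i ≤ α k i := by
        intro i
        have hdiri := abs_lt.mp (hdir i)
        have hαi : (θ i - δ) * (n:ℝ) ≤ (α k i : ℝ) := by
          have h2 : θ i - δ < (α k i : ℝ) / (n:ℝ) := by linarith [hdiri.1]
          have h3 : ((α k i : ℝ) / (n:ℝ)) * n = (α k i : ℝ) := by field_simp
          nlinarith
        have hmain : (m:ℝ) * (β i : ℝ) ≤ (α k i : ℝ) := by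
          calc (m:ℝ) * (β i : ℝ)
              ≤ ((1 - η / 2) * (n:ℝ) / (B:ℝ)) * (β i : ℝ) :=
                mul_le_mul_of_nonneg_right hm_le (Nat.cast_nonneg _)
            _ ≤ ((1 - η / 2) * (n:ℝ) / (B:ℝ)) * ((θ i + δ) * B) :=
                mul_le_mul_of_nonneg_left (hβc i) hx0
            _ = ((1 - η / 2) * (θ i + δ)) * (n:ℝ) := by field_simp
            _ ≤ (θ i - δ) * (n:ℝ) :=
                mul_le_mul_of_nonneg_right (hδkey i) (le_of_lt hn0)
            _ ≤ (α k i : ℝ) := hαi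
        have : ((m * β i : ℕ) : ℝ) ≤ ((α k i : ℕ) : ℝ) := by push_cast; exact hmain
        exact_mod_cast this
      set r : Fin d → ℕ := α k - m • β with hr
      have hdecomp : α k = m • β + r := by
        funext i
        have := hcoord i
        simp only [hr, Pi.add_apply, Pi.sub_apply, Pi.smul_apply, smul_eq_mul]
        omega
      set R : ℕ := ∑ i, r i with hR
      have hRn : R + m * B = n := by
        have hpt : ∀ i ∈ Finset.univ, r i + m * β i = α k i := by
          intro i _
          have := hcoord i
          simp only [hr, Pi.sub_apply, Pi.smul_apply, smul_eq_mul]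
          omega
        calc R + m * B = ∑ i, (r i + m * β i) := by
              rw [Finset.sum_add_distrib, Finset.mul_sum]
          _ = ∑ i, α k i := Finset.sum_congr rfl hpt
          _ = n := rfl
      have hRR : (R:ℝ) = (n:ℝ) - (m:ℝ) * (B:ℝ) := by
        have : ((R:ℕ):ℝ) + (m:ℝ) * (B:ℝ) = (n:ℝ) := by exact_mod_cast congrArg (Nat.cast : ℕ → ℝ) hRn
        linarith
      have hm1 : 1 ≤ m := by
        by_contra h
        have hm0 : m = 0 := by omega
        rw [hm0] at hmB_ge
        push_cast at hmB_ge
        nlinarith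
      have hRle : (R:ℝ) ≤ η * (n:ℝ) := by rw [hRR]; nlinarith
      -- Y chain
      have hYm : Y (m • β) ≤ (v ^ B) ^ m :=
        le_trans (dcl_nsmul Y hY0 hsub β m hm1) (pow_le_pow_left₀ (hY0 β) hβv m)
      have hYαk : Y (α k) ≤ v ^ (m * B) * C ^ (R + 1) := by
        calc Y (α k) = Y (m • β + r) := by rw [← hdecomp]
          _ ≤ Y (m • β) * Y r := hsub _ _
          _ ≤ (v ^ B) ^ m * C ^ (R + 1) :=
              mul_le_mul hYm (hCpow r) (hY0 _) (by positivity)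
          _ = v ^ (m * B) * C ^ (R + 1) := by rw [← pow_mul, mul_comm B m]
      -- rpow step
      have hG_le : G k ≤ v ^ (((m * B : ℕ) : ℝ) * ((n:ℝ))⁻¹) *
          C ^ (((R + 1 : ℕ) : ℝ) * ((n:ℝ))⁻¹) := by
        calc G k ≤ (v ^ (m * B) * C ^ (R + 1)) ^ ((n:ℝ))⁻¹ :=
              Real.rpow_le_rpow (hY0 _) hYαk (by positivity)
          _ = (v ^ (m * B) : ℝ) ^ ((n:ℝ))⁻¹ * (C ^ (R + 1) : ℝ) ^ ((n:ℝ))⁻¹ :=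
              Real.mul_rpow (by positivity) (by positivity)
          _ = v ^ (((m * B : ℕ) : ℝ) * ((n:ℝ))⁻¹) * C ^ (((R + 1 : ℕ) : ℝ) * ((n:ℝ))⁻¹) := by
              rw [← Real.rpow_natCast v (m * B), ← Real.rpow_natCast C (R + 1),
                ← Real.rpow_mul (le_of_lt hv0), ← Real.rpow_mul (le_of_lt hC0)]
      set x : ℝ := ((m * B : ℕ) : ℝ) * ((n:ℝ))⁻¹ with hxdef
      have hxval : x = ((m:ℝ) * (B:ℝ)) / (n:ℝ) := by
        rw [hxdef]; push_cast; ring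
      have hx1 : x ≤ 1 := by
        rw [hxval, div_le_one hn0]
        nlinarith
      have hx2 : 1 - η ≤ x := by
        rw [hxval, le_div_iff₀ hn0]
        linarith [hmB_ge]
      have hvx : v ^ x ≤ v ^ (1 - η) * C ^ ((2:ℝ) * η) := by
        have ht : v ^ x = v ^ (1 - η) * v ^ (x - (1 - η)) := by
          rw [← Real.rpow_add hv0]; ring_nf
        rw [ht]
        refine mul_le_mul_of_nonneg_left ?_ (Real.rpow_nonneg (le_of_lt hv0) _)
        calc v ^ (x - (1 - η)) ≤ (C ^ (2:ℕ) : ℝ) ^ (x - (1 - η)) :=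
              Real.rpow_le_rpow (le_of_lt hv0) hvC (by linarith)
          _ = C ^ ((2:ℝ) * (x - (1 - η))) := by
              rw [← Real.rpow_natCast C 2, ← Real.rpow_mul (le_of_lt hC0)]
              norm_num
          _ ≤ C ^ ((2:ℝ) * η) := Real.rpow_le_rpow_of_exponent_le hC1 (by nlinarith)
      have hCx : C ^ (((R + 1 : ℕ) : ℝ) * ((n:ℝ))⁻¹) ≤ C ^ ((2:ℝ) * η) := by
        apply Real.rpow_le_rpow_of_exponent_le hC1
        have h1 : ((R:ℝ) + 1) ≤ 2 * (η * (n:ℝ)) := by nlinarith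
        push_cast
        rw [← div_eq_mul_inv, div_le_iff₀ hn0]
        nlinarith
      calc G k ≤ v ^ x * C ^ (((R + 1 : ℕ) : ℝ) * ((n:ℝ))⁻¹) := hG_le
        _ ≤ (v ^ (1 - η) * C ^ ((2:ℝ) * η)) * C ^ ((2:ℝ) * η) :=
            mul_le_mul hvx hCx (Real.rpow_nonneg (le_of_lt hC0) _) (by positivity)
        _ = v ^ (1 - η) * C ^ ((4:ℝ) * η) := by
            rw [mul_assoc, ← Real.rpow_add hC0]; ring_nf
    exact limsup_le_of_le hcoG
      (hevG.mono fun k hk => le_of_lt (lt_of_le_of_lt hk hηu))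

  -- conclude by contradiction
  by_contra hlt
  push_neg at hlt
  have hub : limsup G atTop ≤ C ^ (2:ℕ) := limsup_le_of_le hcoG hGbd
  have h1 : L' < (L' + limsup G atTop) / 2 := by linarith
  have h2 : (L' + limsup G atTop) / 2 ≤ C ^ (2:ℕ) := by linarith
  have := key _ h1 h2
  linarith



theorem directional_chebyshev_limit_exists {d : ℕ}
    (Y : (Fin d → ℕ) → ℝ)
    (hY0 : ∀ α, 0 ≤ Y α)
    (hsub : ∀ α β, Y (α + β) ≤ Y α * Y β)
    (θ : Fin d → ℝ) (hθsum : ∑ i, θ i = 1) (hθpos : ∀ i, 0 < θ i) :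
    ∃ T : ℝ, ∀ α : ℕ → (Fin d → ℕ),
      Tendsto (fun k => (∑ i, α k i : ℕ)) atTop atTop →
      (∀ i, Tendsto (fun k => (α k i : ℝ) / ((∑ i, α k i : ℕ) : ℝ)) atTop (nhds (θ i))) →
      Tendsto (fun k => Y (α k) ^ (((∑ i, α k i : ℕ) : ℝ))⁻¹) atTop (nhds T) := by
  classical
  by_cases hex : ∃ a : ℕ → (Fin d → ℕ),
      Tendsto (fun k => (∑ i, a k i : ℕ)) atTop atTop ∧
      (∀ i, Tendsto (fun k => (a k i : ℝ) / ((∑ i, a k i : ℕ) : ℝ)) atTop (nhds (θ i)))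
  · obtain ⟨a, ha1, ha2⟩ := hex
    obtain ⟨C, hC1, hCpow, _⟩ := dcl_growth Y hY0 hsub
    refine ⟨limsup (fun k => Y (a k) ^ (((∑ i, a k i : ℕ) : ℝ))⁻¹) atTop, ?_⟩
    intro α h1 h2
    have hbdd_le : IsBoundedUnder (· ≤ ·) atTop
        (fun k => Y (α k) ^ (((∑ i, α k i : ℕ) : ℝ))⁻¹) :=
      ⟨C ^ (2:ℕ), eventually_map.mpr (dcl_g_bound Y hY0 C hC1 hCpow α h1)⟩
    have hbdd_ge : IsBoundedUnder (· ≥ ·) atTop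
        (fun k => Y (α k) ^ (((∑ i, α k i : ℕ) : ℝ))⁻¹) :=
      ⟨0, eventually_map.mpr (Eventually.of_forall fun k => Real.rpow_nonneg (hY0 _) _)⟩
    have hbdd_le' : IsBoundedUnder (· ≤ ·) atTop
        (fun k => Y (a k) ^ (((∑ i, a k i : ℕ) : ℝ))⁻¹) :=
      ⟨C ^ (2:ℕ), eventually_map.mpr (dcl_g_bound Y hY0 C hC1 hCpow a ha1)⟩
    have hbdd_ge' : IsBoundedUnder (· ≥ ·) atTop
        (fun k => Y (a k) ^ (((∑ i, a k i : ℕ) : ℝ))⁻¹) :=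
      ⟨0, eventually_map.mpr (Eventually.of_forall fun k => Real.rpow_nonneg (hY0 _) _)⟩
    have cross_self := dcl_cross Y hY0 hsub θ hθsum hθpos α α h1 h2 h1 h2
    have c1 := dcl_cross Y hY0 hsub θ hθsum hθpos a α ha1 ha2 h1 h2
    have c2 := dcl_cross Y hY0 hsub θ hθsum hθpos α a h1 h2 ha1 ha2
    have h_eq : liminf (fun k => Y (α k) ^ (((∑ i, α k i : ℕ) : ℝ))⁻¹) atTop =
        limsup (fun k => Y (α k) ^ (((∑ i, α k i : ℕ) : ℝ))⁻¹) atTop :=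
      le_antisymm (liminf_le_limsup hbdd_le hbdd_ge) cross_self
    have hLeq : limsup (fun k => Y (a k) ^ (((∑ i, a k i : ℕ) : ℝ))⁻¹) atTop =
        limsup (fun k => Y (α k) ^ (((∑ i, α k i : ℕ) : ℝ))⁻¹) atTop := by
      apply le_antisymm
      · exact le_trans c1 (le_of_eq h_eq)
      · exact le_trans c2 (liminf_le_limsup hbdd_le' hbdd_ge')
    rw [hLeq]
    exact tendsto_of_liminf_eq_limsup h_eq rfl hbdd_le hbdd_ge
  · exact ⟨0, fun α h1 h2 => absurd ⟨α, h1, h2⟩ hex⟩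
end

section
/- Let Y : ℕ^d → ℝ≥0 be submultiplicative (Y(α+β) ≤ Y(α)Y(β)) with Y(α) > 0 for all α. Then the function θ ↦ T(Y, θ) := lim_{α/|α| → θ} Y(α)^{1/|α|} is log-convex (hence continuous) on the open simplex Σ⁰. -/
open Filter

private lemma floorSeq_tendsto {c : ℝ} (hc : 0 ≤ c) :
    Tendsto (fun k : ℕ => ((⌊(k : ℝ) * c⌋₊ + 1 : ℕ) : ℝ) / (k : ℝ)) atTop (nhds c) := by
  apply tendsto_of_tendsto_of_tendsto_of_le_of_le' (g := fun _ : ℕ => c)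
    (h := fun k : ℕ => c + 1 / (k : ℝ)) tendsto_const_nhds
  · simpa using tendsto_const_nhds.add (tendsto_one_div_atTop_nhds_zero_nat (𝕜 := ℝ))
  · filter_upwards [eventually_ge_atTop 1] with k hk
    have hk0 : (0 : ℝ) < (k : ℝ) := by exact_mod_cast hk
    rw [le_div_iff₀ hk0]
    have h1 := Nat.lt_floor_add_one ((k : ℝ) * c)
    push_cast
    nlinarith
  · filter_upwards [eventually_ge_atTop 1] with k hk
    have hk0 : (0 : ℝ) < (k : ℝ) := by exact_mod_cast hk
    rw [div_le_iff₀ hk0]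
    have hfl : (⌊(k : ℝ) * c⌋₊ : ℝ) ≤ (k : ℝ) * c := Nat.floor_le (by positivity)
    have hkk : (c + 1 / (k : ℝ)) * (k : ℝ) = c * k + 1 := by field_simp
    push_cast
    linarith

private lemma div_div_helper (x S k : ℝ) (hk : k ≠ 0) :
    (x / k) / (S / k) = x / S := by
  rcases eq_or_ne S 0 with h | h
  · simp [h]
  · field_simp

private lemma asym {d : ℕ} (f : ℕ → Fin d → ℕ) (v : Fin d → ℝ) (s : ℝ) (hs : 0 < s)
    (hsum : ∑ i, v i = s)
    (h : ∀ i, Tendsto (fun k => (f k i : ℝ) / (k : ℝ)) atTop (nhds (v i))) :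
    Tendsto (fun k => ((∑ i, f k i : ℕ) : ℝ) / (k : ℝ)) atTop (nhds s) ∧
    Tendsto (fun k => (∑ i, f k i : ℕ)) atTop atTop ∧
    ∀ i, Tendsto (fun k => (f k i : ℝ) / ((∑ i, f k i : ℕ) : ℝ)) atTop (nhds (v i / s)) := by
  have h1 : Tendsto (fun k => ((∑ i, f k i : ℕ) : ℝ) / (k : ℝ)) atTop (nhds s) := by
    have := tendsto_finset_sum (f := fun i k => (f k i : ℝ) / (k : ℝ))
      (x := atTop) (a := v) Finset.univ (fun i _ => h i)
    rw [hsum] at this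
    refine this.congr fun k => ?_
    push_cast
    rw [Finset.sum_div]
  refine ⟨h1, ?_, ?_⟩
  · rw [← tendsto_natCast_atTop_iff (R := ℝ)]
    have h2 : Tendsto (fun k : ℕ => (((∑ i, f k i : ℕ) : ℝ) / (k : ℝ)) * (k : ℝ))
        atTop atTop := h1.pos_mul_atTop hs tendsto_natCast_atTop_atTop
    refine (tendsto_congr' ?_).mp h2
    filter_upwards [eventually_ge_atTop 1] with k hk
    have hk0 : ((k : ℝ)) ≠ 0 := by positivity
    field_simp
  · intro i
    have h3 := (h i).div h1 hs.ne'
    refine h3.congr' ?_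
    filter_upwards [eventually_ge_atTop 1] with k hk
    have hk0 : ((k : ℝ)) ≠ 0 := by
      have : (0:ℝ) < (k:ℝ) := by exact_mod_cast hk
      exact this.ne'
    exact div_div_helper _ _ _ hk0

private lemma key_ineq {d : ℕ}
    (Y : (Fin d → ℕ) → ℝ)
    (hYpos : ∀ α, 0 < Y α)
    (hsub : ∀ α β, Y (α + β) ≤ Y α * Y β)
    (T : (Fin d → ℝ) → ℝ)
    (hT : ∀ θ : Fin d → ℝ, (∑ i, θ i = 1) → (∀ i, 0 < θ i) →
      ∀ α : ℕ → (Fin d → ℕ),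
        Tendsto (fun k => (∑ i, α k i : ℕ)) atTop atTop →
        (∀ i, Tendsto (fun k => (α k i : ℝ) / ((∑ i, α k i : ℕ) : ℝ)) atTop (nhds (θ i))) →
        Tendsto (fun k => Y (α k) ^ (((∑ i, α k i : ℕ) : ℝ))⁻¹) atTop (nhds (T θ)))
    {x y : Fin d → ℝ} (hx1 : ∑ i, x i = 1) (hx2 : ∀ i, 0 < x i)
    (hy1 : ∑ i, y i = 1) (hy2 : ∀ i, 0 < y i)
    {a b : ℝ} (ha : 0 < a) (hb : 0 < b) (hab : a + b = 1)
    (hm1 : ∑ i, (a • x + b • y) i = 1) (hm2 : ∀ i, 0 < (a • x + b • y) i) :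
    T (a • x + b • y) ≤ T x ^ a * T y ^ b := by
  have hd : 0 < d := by
    rcases Nat.eq_zero_or_pos d with h | h
    · subst h; simp at hx1
    · exact h
  haveI hne : Nonempty (Fin d) := Fin.pos_iff_nonempty.mp hd
  set α : ℕ → Fin d → ℕ := fun k i => ⌊(k : ℝ) * (a * x i)⌋₊ + 1 with hα
  set β : ℕ → Fin d → ℕ := fun k i => ⌊(k : ℝ) * (b * y i)⌋₊ + 1 with hβ
  have hAα := asym α (fun i => a * x i) a ha
    (by rw [← Finset.mul_sum, hx1, mul_one])
    (fun i => by simp only [hα]; simpa using floorSeq_tendsto (mul_pos ha (hx2 i)).le)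
  have hAβ := asym β (fun i => b * y i) b hb
    (by rw [← Finset.mul_sum, hy1, mul_one])
    (fun i => by simp only [hβ]; simpa using floorSeq_tendsto (mul_pos hb (hy2 i)).le)
  have hAγ := asym (fun k => α k + β k) (fun i => a * x i + b * y i) 1 one_pos
    (by rw [Finset.sum_add_distrib, ← Finset.mul_sum, ← Finset.mul_sum, hx1, hy1,
          mul_one, mul_one, hab])
    (fun i => by
      have h1 : Tendsto (fun k : ℕ => (α k i : ℝ) / (k : ℝ)) atTop (nhds (a * x i)) := by
        simp only [hα]; simpa using floorSeq_tendsto (mul_pos ha (hx2 i)).le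
      have h2 : Tendsto (fun k : ℕ => (β k i : ℝ) / (k : ℝ)) atTop (nhds (b * y i)) := by
        simp only [hβ]; simpa using floorSeq_tendsto (mul_pos hb (hy2 i)).le
      refine (h1.add h2).congr fun k => ?_
      simp only [Pi.add_apply]
      push_cast
      ring)
  have hTx : Tendsto (fun k => Y (α k) ^ (((∑ i, α k i : ℕ) : ℝ))⁻¹) atTop (nhds (T x)) := by
    refine hT x hx1 hx2 α hAα.2.1 fun i => ?_
    have := hAα.2.2 i
    rwa [mul_div_cancel_left₀ _ ha.ne'] at this
  have hTy : Tendsto (fun k => Y (β k) ^ (((∑ i, β k i : ℕ) : ℝ))⁻¹) atTop (nhds (T y)) := by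
    refine hT y hy1 hy2 β hAβ.2.1 fun i => ?_
    have := hAβ.2.2 i
    rwa [mul_div_cancel_left₀ _ hb.ne'] at this
  have hTm : Tendsto (fun k => Y (α k + β k) ^ (((∑ i, (α k + β k) i : ℕ) : ℝ))⁻¹)
      atTop (nhds (T (a • x + b • y))) := by
    refine hT (a • x + b • y) hm1 hm2 (fun k => α k + β k) hAγ.2.1 fun i => ?_
    have := hAγ.2.2 i
    simpa [Pi.add_apply, Pi.smul_apply, smul_eq_mul] using this
  have hratα : Tendsto (fun k => ((∑ i, α k i : ℕ) : ℝ) / ((∑ i, (α k + β k) i : ℕ) : ℝ))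
      atTop (nhds a) := by
    have h3 := hAα.1.div hAγ.1 one_ne_zero
    rw [div_one] at h3
    refine h3.congr' ?_
    filter_upwards [eventually_ge_atTop 1] with k hk
    have hk0 : ((k : ℝ)) ≠ 0 := by
      have : (0:ℝ) < (k:ℝ) := by exact_mod_cast hk
      exact this.ne'
    exact div_div_helper _ _ _ hk0
  have hratβ : Tendsto (fun k => ((∑ i, β k i : ℕ) : ℝ) / ((∑ i, (α k + β k) i : ℕ) : ℝ))
      atTop (nhds b) := by
    have h3 := hAβ.1.div hAγ.1 one_ne_zero
    rw [div_one] at h3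
    refine h3.congr' ?_
    filter_upwards [eventually_ge_atTop 1] with k hk
    have hk0 : ((k : ℝ)) ≠ 0 := by
      have : (0:ℝ) < (k:ℝ) := by exact_mod_cast hk
      exact this.ne'
    exact div_div_helper _ _ _ hk0
  have hRα : Tendsto (fun k => (Y (α k) ^ (((∑ i, α k i : ℕ) : ℝ))⁻¹) ^
      (((∑ i, α k i : ℕ) : ℝ) / ((∑ i, (α k + β k) i : ℕ) : ℝ))) atTop (nhds (T x ^ a)) :=
    hTx.rpow hratα (Or.inr ha)
  have hRβ : Tendsto (fun k => (Y (β k) ^ (((∑ i, β k i : ℕ) : ℝ))⁻¹) ^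
      (((∑ i, β k i : ℕ) : ℝ) / ((∑ i, (α k + β k) i : ℕ) : ℝ))) atTop (nhds (T y ^ b)) :=
    hTy.rpow hratβ (Or.inr hb)
  refine le_of_tendsto_of_tendsto' hTm (hRα.mul hRβ) fun k => ?_
  have hSα : 0 < ∑ i, α k i := Finset.sum_pos (fun i _ => Nat.succ_pos _) Finset.univ_nonempty
  have hSβ : 0 < ∑ i, β k i := Finset.sum_pos (fun i _ => Nat.succ_pos _) Finset.univ_nonempty
  have hSγ : 0 < ∑ i, (α k + β k) i :=
    Finset.sum_pos (fun i _ => by simp [Pi.add_apply]; exact Or.inl (Nat.succ_pos _)) Finset.univ_nonempty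
  have hSα0 : ((∑ i, α k i : ℕ) : ℝ) ≠ 0 := by positivity
  have hSβ0 : ((∑ i, β k i : ℕ) : ℝ) ≠ 0 := by positivity
  have hSγ0 : (0:ℝ) < ((∑ i, (α k + β k) i : ℕ) : ℝ) := by exact_mod_cast hSγ
  calc Y (α k + β k) ^ (((∑ i, (α k + β k) i : ℕ) : ℝ))⁻¹
      ≤ (Y (α k) * Y (β k)) ^ (((∑ i, (α k + β k) i : ℕ) : ℝ))⁻¹ :=
        Real.rpow_le_rpow (hYpos _).le (hsub _ _) (by positivity)
    _ = Y (α k) ^ (((∑ i, (α k + β k) i : ℕ) : ℝ))⁻¹ *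
        Y (β k) ^ (((∑ i, (α k + β k) i : ℕ) : ℝ))⁻¹ :=
        Real.mul_rpow (hYpos _).le (hYpos _).le
    _ = _ := by
        rw [← Real.rpow_mul (hYpos (α k)).le, ← Real.rpow_mul (hYpos (β k)).le]
        congr 1
        · congr 1
          rw [div_eq_mul_inv, ← mul_assoc, inv_mul_cancel₀ hSα0, one_mul]
        · congr 1
          rw [div_eq_mul_inv, ← mul_assoc, inv_mul_cancel₀ hSβ0, one_mul]

private lemma T_nonneg {d : ℕ}
    (Y : (Fin d → ℕ) → ℝ)
    (hYpos : ∀ α, 0 < Y α)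
    (T : (Fin d → ℝ) → ℝ)
    (hT : ∀ θ : Fin d → ℝ, (∑ i, θ i = 1) → (∀ i, 0 < θ i) →
      ∀ α : ℕ → (Fin d → ℕ),
        Tendsto (fun k => (∑ i, α k i : ℕ)) atTop atTop →
        (∀ i, Tendsto (fun k => (α k i : ℝ) / ((∑ i, α k i : ℕ) : ℝ)) atTop (nhds (θ i))) →
        Tendsto (fun k => Y (α k) ^ (((∑ i, α k i : ℕ) : ℝ))⁻¹) atTop (nhds (T θ)))
    {θ : Fin d → ℝ} (hθ1 : ∑ i, θ i = 1) (hθ2 : ∀ i, 0 < θ i) : 0 ≤ T θ := by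
  set α : ℕ → Fin d → ℕ := fun k i => ⌊(k : ℝ) * θ i⌋₊ + 1 with hα
  have hA := asym α θ 1 one_pos hθ1 (fun i => by simp only [hα]; simpa using floorSeq_tendsto (hθ2 i).le)
  have h := hT θ hθ1 hθ2 α hA.2.1 (fun i => by simpa using hA.2.2 i)
  exact ge_of_tendsto' h fun k => Real.rpow_nonneg (hYpos _).le _

private lemma zero_prop {d : ℕ}
    (Y : (Fin d → ℕ) → ℝ)
    (hYpos : ∀ α, 0 < Y α)
    (hsub : ∀ α β, Y (α + β) ≤ Y α * Y β)
    (T : (Fin d → ℝ) → ℝ)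
    (hT : ∀ θ : Fin d → ℝ, (∑ i, θ i = 1) → (∀ i, 0 < θ i) →
      ∀ α : ℕ → (Fin d → ℕ),
        Tendsto (fun k => (∑ i, α k i : ℕ)) atTop atTop →
        (∀ i, Tendsto (fun k => (α k i : ℝ) / ((∑ i, α k i : ℕ) : ℝ)) atTop (nhds (θ i))) →
        Tendsto (fun k => Y (α k) ^ (((∑ i, α k i : ℕ) : ℝ))⁻¹) atTop (nhds (T θ)))
    {p q : Fin d → ℝ} (hp1 : ∑ i, p i = 1) (hp2 : ∀ i, 0 < p i)
    (hq1 : ∑ i, q i = 1) (hq2 : ∀ i, 0 < q i)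
    (hp0 : T p = 0) : T q = 0 := by
  have hd : 0 < d := by
    rcases Nat.eq_zero_or_pos d with h | h
    · subst h; simp at hq1
    · exact h
  haveI hne : Nonempty (Fin d) := Fin.pos_iff_nonempty.mp hd
  have hne' : (Finset.univ : Finset (Fin d)).Nonempty := Finset.univ_nonempty
  set ε : ℝ := Finset.univ.inf' hne' q with hε
  have hε0 : 0 < ε := (Finset.lt_inf'_iff hne').mpr (fun i _ => hq2 i)
  set t : ℝ := ε / 2 with ht
  have ht0 : 0 < t := by positivity
  set r : Fin d → ℝ := fun i => q i + t * (q i - p i) with hr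
  have hple : ∀ i, p i ≤ 1 := by
    intro i
    have h := Finset.single_le_sum (f := p) (fun j _ => (hp2 j).le) (Finset.mem_univ i)
    rwa [hp1] at h
  have hr2 : ∀ i, 0 < r i := by
    intro i
    have hεq : ε ≤ q i := Finset.inf'_le _ (Finset.mem_univ i)
    have h1 := hple i
    have h2 := hq2 i
    have h3 := hp2 i
    simp only [hr]
    nlinarith
  have hr1 : ∑ i, r i = 1 := by
    simp only [hr]
    rw [Finset.sum_add_distrib, ← Finset.mul_sum, Finset.sum_sub_distrib, hq1, hp1]
    ring
  have h1t : (0:ℝ) < 1 + t := by linarith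
  set A : ℝ := t / (1 + t) with hA
  set B : ℝ := 1 / (1 + t) with hB
  have hA0 : 0 < A := by positivity
  have hB0 : 0 < B := by positivity
  have hAB : A + B = 1 := by
    rw [hA, hB, ← add_div]
    field_simp
    ring
  have hmix : A • p + B • r = q := by
    funext i
    simp only [Pi.add_apply, Pi.smul_apply, smul_eq_mul, hr, hA, hB]
    field_simp
    ring
  have hm1 : ∑ i, (A • p + B • r) i = 1 := by rw [hmix]; exact hq1
  have hm2 : ∀ i, 0 < (A • p + B • r) i := by rw [hmix]; exact hq2
  have hk := key_ineq Y hYpos hsub T hT hp1 hp2 hr1 hr2 hA0 hB0 hAB hm1 hm2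
  rw [hmix, hp0, Real.zero_rpow hA0.ne', zero_mul] at hk
  exact le_antisymm hk (T_nonneg Y hYpos T hT hq1 hq2)

theorem directional_chebyshev_logConvex {d : ℕ}
    (Y : (Fin d → ℕ) → ℝ)
    (hYpos : ∀ α, 0 < Y α)
    (hsub : ∀ α β, Y (α + β) ≤ Y α * Y β)
    (T : (Fin d → ℝ) → ℝ)
    (hT : ∀ θ : Fin d → ℝ, (∑ i, θ i = 1) → (∀ i, 0 < θ i) →
      ∀ α : ℕ → (Fin d → ℕ),
        Tendsto (fun k => (∑ i, α k i : ℕ)) atTop atTop →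
        (∀ i, Tendsto (fun k => (α k i : ℝ) / ((∑ i, α k i : ℕ) : ℝ)) atTop (nhds (θ i))) →
        Tendsto (fun k => Y (α k) ^ (((∑ i, α k i : ℕ) : ℝ))⁻¹) atTop (nhds (T θ))) :
    ConvexOn ℝ {θ : Fin d → ℝ | (∑ i, θ i = 1) ∧ ∀ i, 0 < θ i}
      (fun θ => Real.log (T θ)) := by
  have hmem : ∀ u w : Fin d → ℝ, (∑ i, u i = 1 ∧ ∀ i, 0 < u i) →
      (∑ i, w i = 1 ∧ ∀ i, 0 < w i) → ∀ a b : ℝ, 0 ≤ a → 0 ≤ b → a + b = 1 →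
      (∑ i, (a • u + b • w) i = 1 ∧ ∀ i, 0 < (a • u + b • w) i) := by
    intro u w hu hw a b ha hb hab
    constructor
    · simp only [Pi.add_apply, Pi.smul_apply, smul_eq_mul]
      rw [Finset.sum_add_distrib, ← Finset.mul_sum, ← Finset.mul_sum, hu.1, hw.1]
      linarith
    · intro i
      simp only [Pi.add_apply, Pi.smul_apply, smul_eq_mul]
      rcases ha.lt_or_eq with h | h
      · have h1 : 0 < a * u i := mul_pos h (hu.2 i)
        have h2 : 0 ≤ b * w i := mul_nonneg hb (hw.2 i).le
        linarith
      · have hb1 : b = 1 := by linarith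
        rw [← h, hb1]
        simpa using hw.2 i
  constructor
  · intro u hu w hw a b ha hb hab
    exact hmem u w hu hw a b ha hb hab
  · intro u hu w hw a b ha hb hab
    simp only [smul_eq_mul]
    rcases ha.lt_or_eq with ha' | ha'
    swap
    · have hb1 : b = 1 := by linarith
      have he : a • u + b • w = w := by
        funext i
        simp [← ha', hb1]
      rw [he, ← ha', hb1]
      simp
    rcases hb.lt_or_eq with hb' | hb'
    swap
    · have ha1 : a = 1 := by linarith
      have he : a • u + b • w = u := by
        funext i
        simp [← hb', ha1]
      rw [he, ← hb', ha1]
      simp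
    have hm := hmem u w hu hw a b ha hb hab
    have hkey := key_ineq Y hYpos hsub T hT hu.1 hu.2 hw.1 hw.2 ha' hb' hab hm.1 hm.2
    by_cases hu0 : T u = 0
    · have hw0 : T w = 0 := zero_prop Y hYpos hsub T hT hu.1 hu.2 hw.1 hw.2 hu0
      have hm0 : T (a • u + b • w) = 0 := zero_prop Y hYpos hsub T hT hu.1 hu.2 hm.1 hm.2 hu0
      simp [hu0, hw0, hm0]
    have hw0 : T w ≠ 0 := fun h =>
      hu0 (zero_prop Y hYpos hsub T hT hw.1 hw.2 hu.1 hu.2 h)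
    have hm0 : T (a • u + b • w) ≠ 0 := fun h =>
      hu0 (zero_prop Y hYpos hsub T hT hm.1 hm.2 hu.1 hu.2 h)
    have hTu : 0 < T u := lt_of_le_of_ne (T_nonneg Y hYpos T hT hu.1 hu.2) (Ne.symm hu0)
    have hTw : 0 < T w := lt_of_le_of_ne (T_nonneg Y hYpos T hT hw.1 hw.2) (Ne.symm hw0)
    have hTm : 0 < T (a • u + b • w) :=
      lt_of_le_of_ne (T_nonneg Y hYpos T hT hm.1 hm.2) (Ne.symm hm0)
    calc Real.log (T (a • u + b • w)) ≤ Real.log (T u ^ a * T w ^ b) :=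
          Real.log_le_log hTm hkey
      _ = a * Real.log (T u) + b * Real.log (T w) := by
          rw [Real.log_mul (Real.rpow_pos_of_pos hTu a).ne' (Real.rpow_pos_of_pos hTw b).ne',
            Real.log_rpow hTu, Real.log_rpow hTw]
end

section
/- Let K ⊂ ℂ^d be compact, w an admissible weight, ν a measure on K such that the triple (K, ν, Q) satisfies the weighted Bernstein–Markov property (||w^n p||_K ≤ M_n ||w^n p||_{L²(ν)} with M_n^{1/n} → 1 for all p ∈ P_n). Define Z_n := ∫_{K^N} |VDM(z_1,...,z_N)|² w(z_1)^{2n}···w(z_N)^{2n} dν(z_1)···dν(z_N) and δ^{w,n}(K) := (max over K^N of |VDM| · ∏ w^n)^{(d+1)/(dnN)}. Then Z_n ≤ δ^{w,n}(K)^{2dnN/(d+1)} · ν(K)^N and δ^{w,n}(K)^{2dnN/(d+1)} ≤ M_n^{2N} · Z_n; consequently lim_n Z_n^{(d+1)/(2dnN)} = lim_n δ^{w,n}(K) (whenever the latter limit exists). -/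
open MeasureTheory

lemma aux_sq_le {α : Type*} [MeasurableSpace α] (ν : Measure α)
    (a M : ℝ) (ha : 0 ≤ a) (g : α → ℝ) (hg : ∀ y, 0 ≤ g y) (hgm : Measurable g)
    (h : a ≤ M * Real.sqrt (∫ y, g y ∂ν)) :
    ENNReal.ofReal (a ^ 2) ≤ ENNReal.ofReal (M ^ 2) * ∫⁻ y, ENNReal.ofReal (g y) ∂ν := by
  have hI : ∫ y, g y ∂ν = (∫⁻ y, ENNReal.ofReal (g y) ∂ν).toReal :=
    integral_eq_lintegral_of_nonneg_ae (Filter.Eventually.of_forall hg)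
      hgm.aestronglyMeasurable
  have hInn : 0 ≤ ∫ y, g y ∂ν := integral_nonneg hg
  have ha2 : a ^ 2 ≤ M ^ 2 * (∫⁻ y, ENNReal.ofReal (g y) ∂ν).toReal := by
    calc a ^ 2 ≤ (M * Real.sqrt (∫ y, g y ∂ν)) ^ 2 := pow_le_pow_left₀ ha h 2
      _ = M ^ 2 * (∫ y, g y ∂ν) := by rw [mul_pow, Real.sq_sqrt hInn]
      _ = M ^ 2 * (∫⁻ y, ENNReal.ofReal (g y) ∂ν).toReal := by rw [hI]
  calc ENNReal.ofReal (a ^ 2)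
      ≤ ENNReal.ofReal (M ^ 2 * (∫⁻ y, ENNReal.ofReal (g y) ∂ν).toReal) :=
        ENNReal.ofReal_le_ofReal ha2
    _ = ENNReal.ofReal (M ^ 2) * ENNReal.ofReal ((∫⁻ y, ENNReal.ofReal (g y) ∂ν).toReal) :=
        ENNReal.ofReal_mul (sq_nonneg M)
    _ ≤ ENNReal.ofReal (M ^ 2) * ∫⁻ y, ENNReal.ofReal (g y) ∂ν :=
        mul_le_mul_right ENNReal.ofReal_toReal_le _

/-- Comparison of the free energy `Z_n` with the maximal weighted Vandermonde, via the
weighted Bernstein–Markov property.  Here `W x` is the maximal value of the weighted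
Vandermonde over `K^N`, so `(W x)^2 = δ^{w,n}(K)^{2dnN/(d+1)}`. -/
theorem free_energy_vandermonde_bounds {d n N : ℕ}
    (K : Set (Fin d → ℂ)) (hK : IsCompact K)
    (w : (Fin d → ℂ) → ℝ) (hw0 : ∀ z, 0 ≤ w z) (hwmeas : Measurable w)
    (hwbd : ∃ B : ℝ, ∀ z ∈ K, w z ≤ B)
    (ν : Measure (Fin d → ℂ)) [IsFiniteMeasure ν] (hνK : ν Kᶜ = 0)
    (e : Fin N → MvPolynomial (Fin d) ℂ) (hdeg : ∀ i, (e i).totalDegree ≤ n)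
    (VDM : (Fin N → Fin d → ℂ) → ℝ)
    (hVDM : ∀ z, VDM z
      = ‖Matrix.det (Matrix.of fun i j => MvPolynomial.eval (z j) (e i))‖)
    (W : (Fin N → Fin d → ℂ) → ℝ)
    (hWdef : ∀ z, W z = VDM z * ∏ j, (w (z j)) ^ n)
    (x : Fin N → Fin d → ℂ) (hxK : ∀ j, x j ∈ K)
    (hxmax : ∀ z : Fin N → Fin d → ℂ, (∀ j, z j ∈ K) → W z ≤ W x)
    (M : ℝ) (hM : 0 ≤ M)
    (hBM : ∀ p : MvPolynomial (Fin d) ℂ, p.totalDegree ≤ n → ∀ z ∈ K,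
      ‖MvPolynomial.eval z p‖ * (w z) ^ n ≤
        M * Real.sqrt (∫ y, ‖MvPolynomial.eval y p‖ ^ 2 * (w y) ^ (2 * n) ∂ν))
    (Z : ℝ)
    (hZ : Z = ∫ z, (VDM z) ^ 2 * ∏ j, (w (z j)) ^ (2 * n)
      ∂(Measure.pi fun _ : Fin N => ν)) :
    Z ≤ (W x) ^ 2 * ((ν K).toReal) ^ N ∧ (W x) ^ 2 ≤ M ^ (2 * N) * Z := by
  classical
  set μ : Measure (Fin N → Fin d → ℂ) := Measure.pi fun _ : Fin N => ν with hμ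
  set f : (Fin N → Fin d → ℂ) → ℝ :=
    fun z => (VDM z) ^ 2 * ∏ j, (w (z j)) ^ (2 * n) with hf
  have hpow2 : ∀ r : ℝ, (r ^ n) ^ 2 = r ^ (2 * n) := fun r => by
    rw [← pow_mul, mul_comm n 2]
  -- continuity / measurability of VDM
  have hVDMcont : Continuous VDM := by
    have hVDMfun : VDM = fun z =>
        ‖Matrix.det (Matrix.of fun i j => MvPolynomial.eval (z j) (e i))‖ :=
      funext hVDM
    rw [hVDMfun]
    refine continuous_norm.comp (Continuous.matrix_det ?_)
    exact continuous_pi fun i => continuous_pi fun j =>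
      (MvPolynomial.continuous_eval (e i)).comp (continuous_apply j)
  have hfmeas : Measurable f := by
    refine ((hVDMcont.measurable).pow_const 2).mul ?_
    exact Finset.measurable_prod _ fun j _ =>
      (hwmeas.comp (measurable_pi_apply j)).pow_const (2 * n)
  have hfnn : ∀ z, 0 ≤ f z :=
    fun z => mul_nonneg (sq_nonneg _) (Finset.prod_nonneg fun j _ => pow_nonneg (hw0 _) _)
  have hVDM0 : ∀ z, 0 ≤ VDM z := fun z => (hVDM z) ▸ norm_nonneg _
  have hW0 : ∀ z, 0 ≤ W z := fun z => (hWdef z) ▸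
    mul_nonneg (hVDM0 z) (Finset.prod_nonneg fun j _ => pow_nonneg (hw0 _) _)
  have hfW : ∀ z, f z = (W z) ^ 2 := by
    intro z
    rw [hWdef, mul_pow, ← Finset.prod_pow]
    simp only [hf, hpow2]
  have hfle : ∀ z, (∀ j, z j ∈ K) → f z ≤ (W x) ^ 2 := fun z hz => by
    rw [hfW]; exact pow_le_pow_left₀ (hW0 z) (hxmax z hz) 2
  have hKmeas : MeasurableSet K := hK.isClosed.measurableSet
  have hae : ∀ᵐ z ∂μ, ∀ j, z j ∈ K := by
    rw [MeasureTheory.ae_all_iff]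
    intro j
    rw [ae_iff]
    have hset : {z : Fin N → Fin d → ℂ | ¬ z j ∈ K}
        = Set.pi Set.univ (fun k => if k = j then Kᶜ else Set.univ) := by
      ext z
      simp only [Set.mem_setOf_eq, Set.mem_pi, Set.mem_univ, forall_true_left]
      constructor
      · intro h k
        by_cases hk : k = j
        · subst hk; simpa using h
        · simp [hk]
      · intro h
        have := h j
        simpa using this
    rw [hset, hμ, Measure.pi_pi]
    refine Finset.prod_eq_zero (Finset.mem_univ j) ?_
    simp [hνK]
  have hint : Integrable f μ := by
    refine Integrable.mono' (integrable_const ((W x) ^ 2)) hfmeas.aestronglyMeasurable ?_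
    filter_upwards [hae] with z hz
    rw [Real.norm_eq_abs, abs_of_nonneg (hfnn z)]
    exact hfle z hz
  have hνuniv : ν Set.univ = ν K := by
    refine le_antisymm ?_ (measure_mono (Set.subset_univ K))
    calc ν Set.univ = ν (K ∪ Kᶜ) := by rw [Set.union_compl_self]
      _ ≤ ν K + ν Kᶜ := measure_union_le _ _
      _ = ν K := by rw [hνK, add_zero]
  have hZnn : 0 ≤ Z := hZ ▸ integral_nonneg hfnn
  constructor
  · -- Part 1
    have hmono : (∫ z, f z ∂μ) ≤ ∫ _z, (W x) ^ 2 ∂μ :=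
      integral_mono_ae hint (integrable_const _)
        (by filter_upwards [hae] with z hz using hfle z hz)
    have hconst : (∫ _z : Fin N → Fin d → ℂ, (W x) ^ 2 ∂μ)
        = (W x) ^ 2 * ((ν K).toReal) ^ N := by
      rw [integral_const, smul_eq_mul, hμ, Measure.real, Measure.pi_univ]
      simp only [Finset.prod_const, Finset.card_univ, Fintype.card_fin, hνuniv]
      rw [ENNReal.toReal_pow, mul_comm]
    rw [hZ]
    exact hmono.trans (le_of_eq hconst)
  · -- Part 2
    have hFmeas : Measurable fun z => ENNReal.ofReal (f z) := hfmeas.ennreal_ofReal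
    -- the key one-variable Bernstein–Markov step
    have hstep : ∀ (j0 : Fin N) (z : Fin N → Fin d → ℂ), z j0 ∈ K →
        ENNReal.ofReal (f z) ≤ ENNReal.ofReal (M ^ 2)
          * ∫⁻ t, ENNReal.ofReal (f (Function.update z j0 t)) ∂ν := by
      intro j0 z hz
      set p : MvPolynomial (Fin d) ℂ :=
        (Matrix.of fun i j => if j = j0 then e i
          else MvPolynomial.C (MvPolynomial.eval (z j) (e i))).det with hp
      have hpdeg : p.totalDegree ≤ n := by
        rw [hp, Matrix.det_apply]
        refine MvPolynomial.totalDegree_finsetSum_le fun σ _ => ?_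
        refine le_trans (MvPolynomial.totalDegree_smul_le _ _) ?_
        refine le_trans (MvPolynomial.totalDegree_finset_prod _ _) ?_
        have hterm : ∀ i : Fin N,
            ((Matrix.of fun i j => if j = j0 then e i
              else MvPolynomial.C (MvPolynomial.eval (z j) (e i))) (σ i) i).totalDegree
            ≤ if i = j0 then n else 0 := by
          intro i
          by_cases hi : i = j0
          · simpa [hi] using hdeg (σ i)
          · simp [hi, MvPolynomial.totalDegree_C]
        calc (∑ i, ((Matrix.of fun i j => if j = j0 then e i
              else MvPolynomial.C (MvPolynomial.eval (z j) (e i))) (σ i) i).totalDegree)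
            ≤ ∑ i, (if i = j0 then n else 0) := Finset.sum_le_sum fun i _ => hterm i
          _ = n := by simp
      have hpeval : ∀ y, MvPolynomial.eval y p
          = (Matrix.of fun i j =>
              MvPolynomial.eval ((Function.update z j0 y) j) (e i)).det := by
        intro y
        rw [hp, RingHom.map_det]
        congr 1
        ext i j
        by_cases hj : j = j0
        · subst hj; simp [Matrix.map_apply, Function.update_self]
        · simp [Matrix.map_apply, hj, Function.update_of_ne hj]
      set c : ℝ := ∏ j ∈ Finset.univ.erase j0, (w (z j)) ^ n with hc
      have hc0 : 0 ≤ c := Finset.prod_nonneg fun j _ => pow_nonneg (hw0 _) n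
      have hc2 : c ^ 2 = ∏ j ∈ Finset.univ.erase j0, (w (z j)) ^ (2 * n) := by
        rw [hc, ← Finset.prod_pow]
        exact Finset.prod_congr rfl fun j _ => hpow2 _
      have key : ∀ y, f (Function.update z j0 y)
          = (‖MvPolynomial.eval y p‖ * ((w y) ^ n * c)) ^ 2 := by
        intro y
        have h1 : VDM (Function.update z j0 y) = ‖MvPolynomial.eval y p‖ := by
          rw [hVDM, hpeval]
        have h2 : (∏ j, (w (Function.update z j0 y j)) ^ (2 * n))
            = (w y) ^ (2 * n) * ∏ j ∈ Finset.univ.erase j0, (w (z j)) ^ (2 * n) := by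
          rw [← Finset.mul_prod_erase Finset.univ _ (Finset.mem_univ j0),
            Function.update_self]
          congr 1
          exact Finset.prod_congr rfl fun j hj => by
            rw [Function.update_of_ne (Finset.ne_of_mem_erase hj)]
        show (VDM (Function.update z j0 y)) ^ 2
            * (∏ j, (w (Function.update z j0 y j)) ^ (2 * n)) = _
        rw [h1, h2, mul_pow, mul_pow, hpow2, hc2]
      have hgeq : ∀ t, ‖MvPolynomial.eval t p‖ ^ 2 * (w t) ^ (2 * n) * c ^ 2
          = f (Function.update z j0 t) := by
        intro t
        rw [key t, mul_pow, mul_pow, hpow2]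
        ring
      have hineq : ‖MvPolynomial.eval (z j0) p‖ * ((w (z j0)) ^ n * c)
          ≤ M * Real.sqrt (∫ t, f (Function.update z j0 t) ∂ν) := by
        have h0 := hBM p hpdeg (z j0) hz
        have hII : 0 ≤ ∫ t, ‖MvPolynomial.eval t p‖ ^ 2 * (w t) ^ (2 * n) ∂ν :=
          integral_nonneg fun t => mul_nonneg (sq_nonneg _) (pow_nonneg (hw0 _) _)
        calc ‖MvPolynomial.eval (z j0) p‖ * ((w (z j0)) ^ n * c)
            = (‖MvPolynomial.eval (z j0) p‖ * (w (z j0)) ^ n) * c := by ring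
          _ ≤ (M * Real.sqrt (∫ t, ‖MvPolynomial.eval t p‖ ^ 2
                * (w t) ^ (2 * n) ∂ν)) * c := mul_le_mul_of_nonneg_right h0 hc0
          _ = M * (Real.sqrt (∫ t, ‖MvPolynomial.eval t p‖ ^ 2
                * (w t) ^ (2 * n) ∂ν) * Real.sqrt (c ^ 2)) := by
              rw [Real.sqrt_sq hc0]; ring
          _ = M * Real.sqrt ((∫ t, ‖MvPolynomial.eval t p‖ ^ 2
                * (w t) ^ (2 * n) ∂ν) * c ^ 2) := by rw [Real.sqrt_mul hII]
          _ = M * Real.sqrt (∫ t, f (Function.update z j0 t) ∂ν) := by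
              rw [← integral_mul_const]
              simp_rw [hgeq]
      have hupd : Measurable fun t => f (Function.update z j0 t) :=
        hfmeas.comp (measurable_update z)
      have := aux_sq_le ν _ M
        (mul_nonneg (norm_nonneg _) (mul_nonneg (pow_nonneg (hw0 _) _) hc0))
        (fun t => f (Function.update z j0 t)) (fun t => hfnn _) hupd hineq
      calc ENNReal.ofReal (f z)
          = ENNReal.ofReal ((‖MvPolynomial.eval (z j0) p‖
              * ((w (z j0)) ^ n * c)) ^ 2) := by
            rw [← key (z j0), Function.update_eq_self]
        _ ≤ ENNReal.ofReal (M ^ 2)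
              * ∫⁻ t, ENNReal.ofReal (f (Function.update z j0 t)) ∂ν := this
    -- induction over the set of integrated coordinates
    have haeK : ∀ᵐ t ∂ν, t ∈ K := by
      rw [ae_iff]
      exact hνK
    have hind : ∀ s : Finset (Fin N), ∀ z : Fin N → Fin d → ℂ, (∀ j, z j ∈ K) →
        ENNReal.ofReal (f z) ≤ ENNReal.ofReal (M ^ 2) ^ s.card
          * MeasureTheory.lmarginal (fun _ : Fin N => ν) s
              (fun y => ENNReal.ofReal (f y)) z := by
      intro s
      induction s using Finset.induction_on with
      | empty =>
        intro z hz
        simp [MeasureTheory.lmarginal_empty]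
      | @insert j0 s hj0 ih =>
        intro z hz
        rw [MeasureTheory.lmarginal_insert _ hFmeas hj0]
        have hmarg : Measurable (MeasureTheory.lmarginal (fun _ : Fin N => ν) s
            (fun y => ENNReal.ofReal (f y))) := hFmeas.lmarginal _
        calc ENNReal.ofReal (f z)
            ≤ ENNReal.ofReal (M ^ 2)
              * ∫⁻ t, ENNReal.ofReal (f (Function.update z j0 t)) ∂ν := hstep j0 z (hz j0)
          _ ≤ ENNReal.ofReal (M ^ 2) * ∫⁻ t, ENNReal.ofReal (M ^ 2) ^ s.card
              * MeasureTheory.lmarginal (fun _ : Fin N => ν) s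
                  (fun y => ENNReal.ofReal (f y)) (Function.update z j0 t) ∂ν := by
              refine mul_le_mul_right (lintegral_mono_ae ?_) _
              filter_upwards [haeK] with t ht
              refine ih (Function.update z j0 t) ?_
              intro j
              by_cases hj : j = j0
              · subst hj; simpa [Function.update_self] using ht
              · rw [Function.update_of_ne hj]; exact hz j
          _ = ENNReal.ofReal (M ^ 2) ^ (insert j0 s).card
              * ∫⁻ t, MeasureTheory.lmarginal (fun _ : Fin N => ν) s
                  (fun y => ENNReal.ofReal (f y)) (Function.update z j0 t) ∂ν := by
              have hcm : Measurable fun t : Fin d → ℂ =>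
                  MeasureTheory.lmarginal (fun _ : Fin N => ν) s
                    (fun y => ENNReal.ofReal (f y)) (Function.update z j0 t) :=
                hmarg.comp (measurable_update z)
              rw [lintegral_const_mul _ hcm,
                Finset.card_insert_of_notMem hj0, pow_succ]
              ring
    have hu := hind Finset.univ x hxK
    rw [MeasureTheory.lmarginal_univ] at hu
    have hlint : (∫⁻ z, ENNReal.ofReal (f z) ∂μ) = ENNReal.ofReal Z := by
      rw [hZ]
      exact (ofReal_integral_eq_lintegral_ofReal hint
        (Filter.Eventually.of_forall hfnn)).symm
    rw [Finset.card_univ, Fintype.card_fin] at hu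
    have hu2 : ENNReal.ofReal ((W x) ^ 2) ≤ ENNReal.ofReal (M ^ (2 * N) * Z) := by
      calc ENNReal.ofReal ((W x) ^ 2)
          = ENNReal.ofReal (f x) := by rw [hfW]
        _ ≤ ENNReal.ofReal (M ^ 2) ^ N * ∫⁻ z, ENNReal.ofReal (f z) ∂μ := hu
        _ = ENNReal.ofReal (M ^ (2 * N)) * ENNReal.ofReal Z := by
            rw [hlint, ← ENNReal.ofReal_pow (sq_nonneg M), ← pow_mul]
        _ = ENNReal.ofReal (M ^ (2 * N) * Z) := by
            rw [ENNReal.ofReal_mul (pow_nonneg hM _)]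
    exact (ENNReal.ofReal_le_ofReal_iff
      (mul_nonneg (pow_nonneg hM _) hZnn)).mp hu2
end
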